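/- arXiv:math/0107043 — 2 statements merged into one kernel-verified Lean document; each statement's English description precedes it below -/
import Mathlib

section
/- Let x and y be two points on the unit circle in ℂ and let P_n be defined by P_0 = 1, P_1 = 1 + x, and P_{n+1}(z) = P_n(z) + z^{n+1} P_{n-1}(z). Then for all integers n ≥ 0, |P_n(x) - P_n(y)| ≤ (n+1)² φ^{n+1} |x - y|, where φ = (1+√5)/2. -/
noncomputable def phi : ℝ := (1 + Real.sqrt 5) / 2

/-! On the unit disc the norms of the `P_n` obey a Fibonacci-type inequality, so
`‖P_n(y)‖ ≤ φ^{n+1}`. Subtracting the recurrences and using `‖x^k - y^k‖ ≤ k ‖x - y‖`,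
`d_n = ‖P_n(x) - P_n(y)‖` satisfies `d_{n+2} ≤ d_{n+1} + d_n + (n+2) φ^{n+1} ‖x - y‖`,
while `(n+1)² φ^{n+1} ‖x - y‖` satisfies the reverse inequality; a two-step comparison
argument gives the bound. -/

open Real goldenRatio

lemma le_of_twoStep_recurrence {a b e : ℕ → ℝ} (h0 : a 0 ≤ b 0) (h1 : a 1 ≤ b 1)
    (ha : ∀ n, a (n + 2) ≤ a (n + 1) + a n + e n)
    (hb : ∀ n, b (n + 1) + b n + e n ≤ b (n + 2)) :
    ∀ n, a n ≤ b n :=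
  Nat.twoStepInduction h0 h1 fun n hn hn1 => by linarith [ha n, hb n]

section NormedRing

variable {R : Type*} [NormedRing R]

lemma norm_mul_le_of_norm_le_one_left {a : R} (ha : ‖a‖ ≤ 1) (b : R) :
    ‖a * b‖ ≤ ‖b‖ :=
  (norm_mul_le a b).trans (mul_le_of_le_one_left (norm_nonneg b) ha)

variable [NormOneClass R]

lemma norm_pow_le_one {x : R} (hx : ‖x‖ ≤ 1) (k : ℕ) : ‖x ^ k‖ ≤ 1 :=
  (norm_pow_le x k).trans (pow_le_one₀ (norm_nonneg x) hx)

theorem norm_pow_sub_pow_le {x y : R} (hx : ‖x‖ ≤ 1) (hy : ‖y‖ ≤ 1) (k : ℕ) :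
    ‖x ^ k - y ^ k‖ ≤ k * ‖x - y‖ := by
  induction k with
  | zero => simp
  | succ k ih =>
    have hsplit : x ^ (k + 1) - y ^ (k + 1) = x * (x ^ k - y ^ k) + (x - y) * y ^ k := by
      simp only [pow_succ', mul_sub, sub_mul, sub_add_sub_cancel]
    have hxk : ‖x * (x ^ k - y ^ k)‖ ≤ k * ‖x - y‖ :=
      (norm_mul_le_of_norm_le_one_left hx _).trans ih
    have hyk : ‖(x - y) * y ^ k‖ ≤ ‖x - y‖ :=
      (norm_mul_le _ _).trans <|
        mul_le_of_le_one_right (norm_nonneg _) (norm_pow_le_one hy k)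
    rw [hsplit]
    push_cast
    linarith [norm_add_le (x * (x ^ k - y ^ k)) ((x - y) * y ^ k)]

theorem norm_le_goldenRatio_pow {z : R} (hz : ‖z‖ ≤ 1) {P : ℕ → R}
    (h0 : P 0 = 1) (h1 : P 1 = 1 + z) (hrec : ∀ n, P (n + 2) = P (n + 1) + z ^ (n + 2) * P n) :
    ∀ n, ‖P n‖ ≤ φ ^ (n + 1) := by
  refine le_of_twoStep_recurrence (e := 0) ?_ ?_ (fun n => ?_) (fun n => ?_)
  · simpa [h0] using one_lt_goldenRatio.le
  · rw [h1, goldenRatio_sq]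
    linarith [norm_add_le (1 : R) z, norm_one (α := R), one_lt_goldenRatio]
  · rw [hrec, Pi.zero_apply, add_zero]
    exact (norm_add_le _ _).trans
      (add_le_add_right (norm_mul_le_of_norm_le_one_left (norm_pow_le_one hz _) _) _)
  · simp only [Pi.zero_apply, add_zero]
    linarith [goldenRatio_pow_sub_goldenRatio_pow (n + 1)]

theorem norm_sub_le_of_recurrence {x y : R} (hx : ‖x‖ ≤ 1) {Px Py : ℕ → R}
    (hPx : ∀ n, Px (n + 2) = Px (n + 1) + x ^ (n + 2) * Px n)
    (hPy : ∀ n, Py (n + 2) = Py (n + 1) + y ^ (n + 2) * Py n) (n : ℕ) :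
    ‖Px (n + 2) - Py (n + 2)‖ ≤ ‖Px (n + 1) - Py (n + 1)‖ + ‖Px n - Py n‖
      + ‖x ^ (n + 2) - y ^ (n + 2)‖ * ‖Py n‖ := by
  have hsplit : Px (n + 2) - Py (n + 2) = (Px (n + 1) - Py (n + 1))
      + x ^ (n + 2) * (Px n - Py n) + (x ^ (n + 2) - y ^ (n + 2)) * Py n := by
    rw [hPx, hPy]; noncomm_ring
  have hmid := norm_mul_le_of_norm_le_one_left (norm_pow_le_one hx (n + 2)) (Px n - Py n)
  rw [hsplit]
  linarith [norm_add_le (Px (n + 1) - Py (n + 1) + x ^ (n + 2) * (Px n - Py n))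
      ((x ^ (n + 2) - y ^ (n + 2)) * Py n),
    norm_add_le (Px (n + 1) - Py (n + 1)) (x ^ (n + 2) * (Px n - Py n)),
    norm_mul_le (x ^ (n + 2) - y ^ (n + 2)) (Py n)]

end NormedRing

lemma sq_mul_goldenRatio_pow_recurrence (n : ℕ) :
    ((n : ℝ) + 2) ^ 2 * φ ^ (n + 2) + ((n : ℝ) + 1) ^ 2 * φ ^ (n + 1)
      + ((n : ℝ) + 2) * φ ^ (n + 1) ≤ ((n : ℝ) + 3) ^ 2 * φ ^ (n + 3) := by
  have hφ := goldenRatio_pow_sub_goldenRatio_pow (n + 1)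
  have h1 : 0 ≤ φ ^ (n + 1) := by positivity
  have h2 : 0 ≤ φ ^ (n + 2) := by positivity
  have hn : (0 : ℝ) ≤ n := n.cast_nonneg
  nlinarith [mul_nonneg hn h1, mul_nonneg hn h2]

/-- For `x, y` on the unit circle, `|P_n(x) - P_n(y)| ≤ (n+1)² φ^{n+1} |x - y|`. -/
theorem stmt4 (x y : ℂ) (hx : ‖x‖ = 1) (hy : ‖y‖ = 1)
    (Px Py : ℕ → ℂ)
    (hPx0 : Px 0 = 1) (hPx1 : Px 1 = 1 + x)
    (hPxrec : ∀ n : ℕ, Px (n + 2) = Px (n + 1) + x ^ (n + 2) * Px n)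
    (hPy0 : Py 0 = 1) (hPy1 : Py 1 = 1 + y)
    (hPyrec : ∀ n : ℕ, Py (n + 2) = Py (n + 1) + y ^ (n + 2) * Py n) :
    ∀ n : ℕ, ‖Px n - Py n‖ ≤
      ((n : ℝ) + 1) ^ 2 * phi ^ (n + 1) * ‖x - y‖ := by
  change ∀ n : ℕ, ‖Px n - Py n‖ ≤ ((n : ℝ) + 1) ^ 2 * φ ^ (n + 1) * ‖x - y‖
  refine le_of_twoStep_recurrence (e := fun n => ((n : ℝ) + 2) * φ ^ (n + 1) * ‖x - y‖)
    ?_ ?_ (fun n => ?_) (fun n => ?_)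
  · simp only [hPx0, hPy0, sub_self, norm_zero]; positivity
  · rw [hPx1, hPy1, add_sub_add_left_eq_sub]
    refine le_mul_of_one_le_left (norm_nonneg _) ?_
    norm_num [goldenRatio_sq]
    linarith [one_lt_goldenRatio]
  · refine (norm_sub_le_of_recurrence hx.le hPxrec hPyrec n).trans (add_le_add_right ?_ _)
    calc ‖x ^ (n + 2) - y ^ (n + 2)‖ * ‖Py n‖
          ≤ ((n + 2 : ℕ) * ‖x - y‖) * φ ^ (n + 1) :=
          mul_le_mul (norm_pow_sub_pow_le hx.le hy.le _)
            (norm_le_goldenRatio_pow hy.le hPy0 hPy1 hPyrec n) (norm_nonneg _) (by positivity)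
      _ = _ := by push_cast; ring
  · push_cast
    linarith [mul_le_mul_of_nonneg_right (sq_mul_goldenRatio_pow_recurrence n)
      (norm_nonneg (x - y))]
end

section
/- Let t be the irrational with continued fraction partial quotients a_i equal to a tower of i twos with an i on top, and convergent denominators d_i. Then for all i ≥ 3, a_{i+1} > 16^{d_i²}, and consequently |t - c_i/d_i| < 1/(2π d_i² (d_i+1)² φ^{d_i² + 2 d_i}), where φ = (1+√5)/2. -/
/-- The Gauss map `x ↦ {1/x}`. -/
noncomputable def gaussMap (x : ℝ) : ℝ := Int.fract (1 / x)

/-- The `k`-th partial quotient `a_k(t)` (for `k ≥ 1`) of the regular continued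
fraction of an irrational `t ∈ (0,1)`. -/
noncomputable def cfPQ (t : ℝ) (k : ℕ) : ℤ := ⌊1 / gaussMap^[k - 1] t⌋

noncomputable def cfDenAux (t : ℝ) : ℕ → ℤ × ℤ
  | 0 => (1, cfPQ t 1)
  | n + 1 => ((cfDenAux t n).2, cfPQ t (n + 2) * (cfDenAux t n).2 + (cfDenAux t n).1)

/-- The denominator `d_n(t)` of the `n`-th convergent. -/
noncomputable def cfDen (t : ℝ) (n : ℕ) : ℤ := (cfDenAux t n).1

noncomputable def cfNumAux (t : ℝ) : ℕ → ℤ × ℤ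
  | 0 => (0, 1)
  | n + 1 => ((cfNumAux t n).2, cfPQ t (n + 2) * (cfNumAux t n).2 + (cfNumAux t n).1)

/-- The numerator `c_n(t)` of the `n`-th convergent. -/
noncomputable def cfNum (t : ℝ) (n : ℕ) : ℤ := (cfNumAux t n).1

/-- `tw k m` is a tower of `k` twos with `m` on top. -/
def tw : ℕ → ℕ → ℕ
  | 0, m => m
  | k + 1, m => 2 ^ tw k m

/-!
Let `x = gaussMap^[n+1] t`. Unwinding the recursions gives
`t = (c_{n+1} + c_n x) / (d_{n+1} + d_n x)` and `c_{n+1} d_n - c_n d_{n+1} = (-1)^n`, so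
`|t - c_{n+1}/d_{n+1}| = x / (d_{n+1} (d_{n+1} + d_n x))`, which is `< 1 / (d_{n+1}² a_{n+2})`
because `0 < x ≤ 1 / a_{n+2}`.

For the tower quotients, `a_{i+1} = 2^T` with `T = tw i (i+1)` and `d_{i+1} ≤ 2 a_{i+1} d_i`, so
`d_i² < 2^T` gives `4 d_{i+1}² < 2^{T²} ≤ tw (i+1) (i+2)`; starting from `d_2 = 33` this proves
`4 d_i² < tw i (i+1)` for `i ≥ 3`, i.e. `16^{d_i²} < a_{i+1}`. The second bound then follows from
`2π (d+1)² φ^{d²+2d} < 2^{3 + 2d + d² + 2d} ≤ 16^{d²}` for `d ≥ 2`.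
-/

lemma le_tw (k m : ℕ) : m ≤ tw k m := by
  induction k with
  | zero => exact le_rfl
  | succ k ih => exact ih.trans Nat.lt_two_pow_self.le

lemma tw_strictMono (k : ℕ) : StrictMono (tw k) := by
  induction k with
  | zero => exact strictMono_id
  | succ k ih => exact (pow_right_strictMono₀ one_lt_two).comp ih

lemma tw_sq_le_tw_succ {k : ℕ} (hk : 2 ≤ k) (m : ℕ) : tw k m ^ 2 ≤ tw k (m + 1) := by
  obtain ⟨j, rfl⟩ := Nat.exists_eq_add_of_le' hk
  have h : tw j m + 1 ≤ tw j (m + 1) := tw_strictMono j (Nat.lt_succ_self m)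
  calc tw (j + 2) m ^ 2 = 2 ^ 2 ^ (tw j m + 1) := by rw [tw, tw, ← pow_mul, pow_succ]
    _ ≤ tw (j + 2) (m + 1) := Nat.pow_le_pow_right two_pos (Nat.pow_le_pow_right two_pos h)

section ContinuedFraction

variable {t : ℝ}

lemma cfDen_zero (t : ℝ) : cfDen t 0 = 1 := rfl

lemma cfDen_one (t : ℝ) : cfDen t 1 = cfPQ t 1 := rfl

lemma cfDen_add_two (t : ℝ) (n : ℕ) :
    cfDen t (n + 2) = cfPQ t (n + 2) * cfDen t (n + 1) + cfDen t n := rfl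

lemma cfNum_zero (t : ℝ) : cfNum t 0 = 0 := rfl

lemma cfNum_one (t : ℝ) : cfNum t 1 = 1 := rfl

lemma cfNum_add_two (t : ℝ) (n : ℕ) :
    cfNum t (n + 2) = cfPQ t (n + 2) * cfNum t (n + 1) + cfNum t n := rfl

lemma cfNum_mul_cfDen_sub_cfNum_mul_cfDen (t : ℝ) (n : ℕ) :
    cfNum t (n + 1) * cfDen t n - cfNum t n * cfDen t (n + 1) = (-1) ^ n := by
  induction n with
  | zero => simp [cfNum_one, cfNum_zero, cfDen_zero]
  | succ n ih =>
    rw [cfNum_add_two, cfDen_add_two, pow_succ]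
    linear_combination (-1 : ℤ) * ih

lemma gaussMap_iterate_eq_one_div (t : ℝ) (k : ℕ) :
    gaussMap^[k] t = 1 / (cfPQ t (k + 1) + gaussMap^[k + 1] t) := by
  rw [Function.iterate_succ_apply', cfPQ, Nat.add_sub_cancel, gaussMap, Int.floor_add_fract,
    one_div_one_div]

lemma gaussMap_iterate_succ_nonneg (t : ℝ) (k : ℕ) : 0 ≤ gaussMap^[k + 1] t := by
  rw [Function.iterate_succ_apply']
  exact Int.fract_nonneg _

lemma cfPQ_add_gaussMap_iterate_pos (hpos : ∀ k, 0 < cfPQ t (k + 1)) (k : ℕ) :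
    0 < cfPQ t (k + 1) + gaussMap^[k + 1] t := by
  have ha : (1 : ℝ) ≤ cfPQ t (k + 1) := by exact_mod_cast hpos k
  linarith [gaussMap_iterate_succ_nonneg t k]

lemma gaussMap_iterate_succ_pos (hpos : ∀ k, 0 < cfPQ t (k + 1)) (k : ℕ) :
    0 < gaussMap^[k + 1] t := by
  rw [gaussMap_iterate_eq_one_div]
  exact one_div_pos.mpr (cfPQ_add_gaussMap_iterate_pos hpos (k + 1))

lemma mul_cfDen_add_eq (hpos : ∀ k, 0 < cfPQ t (k + 1)) (n : ℕ) :
    t * (cfDen t (n + 1) + cfDen t n * gaussMap^[n + 1] t) =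
      cfNum t (n + 1) + cfNum t n * gaussMap^[n + 1] t := by
  induction n with
  | zero =>
    have ht := gaussMap_iterate_eq_one_div t 0
    rw [Function.iterate_zero_apply, eq_div_iff (cfPQ_add_gaussMap_iterate_pos hpos 0).ne'] at ht
    rw [cfDen_one, cfDen_zero, cfNum_one, cfNum_zero]
    push_cast
    linear_combination ht
  | succ n ih =>
    have hy := (cfPQ_add_gaussMap_iterate_pos hpos (n + 1)).ne'
    have hx : gaussMap^[n + 1] t * (cfPQ t (n + 2) + gaussMap^[n + 2] t) = 1 := by
      rw [gaussMap_iterate_eq_one_div t (n + 1)]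
      field_simp
    rw [cfDen_add_two, cfNum_add_two]
    push_cast
    linear_combination (cfPQ t (n + 2) + gaussMap^[n + 2] t) * ih
      + (cfNum t n - t * cfDen t n) * hx

lemma one_le_cfDen (hpos : ∀ k, 0 < cfPQ t (k + 1)) (n : ℕ) : 1 ≤ cfDen t n := by
  induction n using Nat.twoStepInduction with
  | zero => exact le_rfl
  | one => exact hpos 0
  | more n ih₀ ih₁ =>
    rw [cfDen_add_two]
    nlinarith [hpos (n + 1)]

lemma cfDen_le_cfDen_succ (hpos : ∀ k, 0 < cfPQ t (k + 1)) (n : ℕ) :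
    cfDen t n ≤ cfDen t (n + 1) := by
  cases n with
  | zero => exact hpos 0
  | succ n =>
    rw [cfDen_add_two]
    nlinarith [hpos (n + 1), one_le_cfDen hpos n, one_le_cfDen hpos (n + 1)]

lemma cfDen_succ_le (hpos : ∀ k, 0 < cfPQ t (k + 1)) (n : ℕ) :
    cfDen t (n + 1) ≤ 2 * cfPQ t (n + 1) * cfDen t n := by
  cases n with
  | zero => rw [cfDen_one, cfDen_zero]; linarith [hpos 0]
  | succ n =>
    rw [cfDen_add_two]
    nlinarith [hpos (n + 1), one_le_cfDen hpos (n + 1), cfDen_le_cfDen_succ hpos n]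

lemma abs_sub_cfNum_div_cfDen (hpos : ∀ k, 0 < cfPQ t (k + 1)) (n : ℕ) :
    |t - cfNum t (n + 1) / cfDen t (n + 1)| =
      gaussMap^[n + 1] t /
        (cfDen t (n + 1) * (cfDen t (n + 1) + cfDen t n * gaussMap^[n + 1] t)) := by
  set x := gaussMap^[n + 1] t
  have hx : 0 < x := gaussMap_iterate_succ_pos hpos n
  have hD : (0 : ℝ) < cfDen t (n + 1) := by exact_mod_cast one_le_cfDen hpos (n + 1)
  have hD' : (0 : ℝ) < cfDen t n := by exact_mod_cast one_le_cfDen hpos n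
  have hdet : (cfNum t (n + 1) * cfDen t n - cfNum t n * cfDen t (n + 1) : ℝ) = (-1) ^ n := by
    exact_mod_cast cfNum_mul_cfDen_sub_cfNum_mul_cfDen t n
  have hsub : t - cfNum t (n + 1) / cfDen t (n + 1) =
      -((-1) ^ n * x) / (cfDen t (n + 1) * (cfDen t (n + 1) + cfDen t n * x)) := by
    rw [eq_div_iff (by positivity)]
    field_simp
    linear_combination cfDen t (n + 1) * mul_cfDen_add_eq hpos n - x * hdet
  rw [hsub, abs_div, abs_neg, abs_mul, abs_pow, abs_neg, abs_one, one_pow, one_mul, abs_of_pos hx,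
    abs_of_pos (by positivity)]

lemma abs_sub_cfNum_div_cfDen_lt (hpos : ∀ k, 0 < cfPQ t (k + 1)) (n : ℕ) :
    |t - cfNum t (n + 1) / cfDen t (n + 1)| < 1 / (cfDen t (n + 1) ^ 2 * cfPQ t (n + 2)) := by
  have ha : (0 : ℝ) < cfPQ t (n + 2) := by exact_mod_cast hpos (n + 1)
  have hxa : gaussMap^[n + 1] t ≤ 1 / cfPQ t (n + 2) := by
    rw [gaussMap_iterate_eq_one_div]
    exact one_div_le_one_div_of_le ha (le_add_of_nonneg_right (gaussMap_iterate_succ_nonneg t _))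
  set x := gaussMap^[n + 1] t
  have hx : 0 < x := gaussMap_iterate_succ_pos hpos n
  have hD : (0 : ℝ) < cfDen t (n + 1) := by exact_mod_cast one_le_cfDen hpos (n + 1)
  have hD' : (0 : ℝ) < cfDen t n := by exact_mod_cast one_le_cfDen hpos n
  rw [abs_sub_cfNum_div_cfDen hpos]
  calc x / (cfDen t (n + 1) * (cfDen t (n + 1) + cfDen t n * x))
      < x / cfDen t (n + 1) ^ 2 := by
        rw [sq]
        exact div_lt_div_of_pos_left hx (by positivity) (by nlinarith [mul_pos (mul_pos hD hD') hx])
    _ ≤ 1 / cfPQ t (n + 2) / cfDen t (n + 1) ^ 2 := by gcongr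
    _ = 1 / (cfDen t (n + 1) ^ 2 * cfPQ t (n + 2)) := by rw [div_div, mul_comm]

end ContinuedFraction

section TowerOfTwos

variable {t : ℝ}

lemma cfPQ_pos_of_eq_tw (ha : ∀ i : ℕ, 1 ≤ i → cfPQ t i = (tw i i : ℤ)) (k : ℕ) :
    0 < cfPQ t (k + 1) := by
  rw [ha (k + 1) (by omega)]
  exact_mod_cast (Nat.succ_pos k).trans_le (le_tw _ _)

lemma two_le_cfDen_of_eq_tw (ha : ∀ i : ℕ, 1 ≤ i → cfPQ t i = (tw i i : ℤ)) {i : ℕ}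
    (hi : 1 ≤ i) : 2 ≤ cfDen t i := by
  calc (2 : ℤ) = cfDen t 1 := by rw [cfDen_one, ha 1 le_rfl]; rfl
    _ ≤ cfDen t i := monotone_nat_of_le_succ (cfDen_le_cfDen_succ (cfPQ_pos_of_eq_tw ha)) hi

lemma four_mul_sq_lt_two_pow_sq {D D' : ℤ} {T : ℕ} (hT : 5 ≤ T) (hD' : 0 ≤ D')
    (h : D' ≤ 2 * 2 ^ T * D) (hD : D ^ 2 < 2 ^ T) : 4 * D' ^ 2 < 2 ^ (T ^ 2) := by
  calc 4 * D' ^ 2 ≤ 4 * (2 * 2 ^ T * D) ^ 2 := by gcongr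
    _ = 16 * 2 ^ (2 * T) * D ^ 2 := by ring
    _ < 16 * 2 ^ (2 * T) * 2 ^ T := by gcongr
    _ = 2 ^ (3 * T + 4) := by ring
    _ ≤ 2 ^ (T ^ 2) := pow_le_pow_right₀ (by norm_num) (by nlinarith)

lemma four_mul_cfDen_succ_sq_lt_tw (ha : ∀ i : ℕ, 1 ≤ i → cfPQ t i = (tw i i : ℤ)) {i : ℕ}
    (hi : 2 ≤ i) (hd : cfDen t i ^ 2 < 2 ^ tw i (i + 1)) :
    4 * cfDen t (i + 1) ^ 2 < tw (i + 1) (i + 2) := by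
  have hpos := cfPQ_pos_of_eq_tw ha
  have hT : 5 ≤ tw i (i + 1) := by
    obtain ⟨j, rfl⟩ : ∃ j, i = j + 1 := ⟨i - 1, by omega⟩
    calc 5 ≤ 2 ^ 3 := by norm_num
      _ ≤ 2 ^ tw j (j + 1 + 1) :=
        Nat.pow_le_pow_right two_pos ((show 3 ≤ j + 1 + 1 by omega).trans (le_tw _ _))
  have hstep : cfDen t (i + 1) ≤ 2 * 2 ^ tw i (i + 1) * cfDen t i := by
    have h := cfDen_succ_le hpos i
    rwa [ha (i + 1) (by omega), tw, Nat.cast_pow, Nat.cast_ofNat] at h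
  calc 4 * cfDen t (i + 1) ^ 2 < 2 ^ (tw i (i + 1) ^ 2) :=
        four_mul_sq_lt_two_pow_sq hT (by linarith [one_le_cfDen hpos (i + 1)]) hstep hd
    _ ≤ tw (i + 1) (i + 2) := by
      rw [tw, Nat.cast_pow, Nat.cast_ofNat]
      exact pow_le_pow_right₀ one_le_two (tw_sq_le_tw_succ hi _)

lemma four_mul_cfDen_sq_lt_tw (ha : ∀ i : ℕ, 1 ≤ i → cfPQ t i = (tw i i : ℤ)) {i : ℕ}
    (hi : 3 ≤ i) : 4 * cfDen t i ^ 2 < tw i (i + 1) := by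
  induction i, hi using Nat.le_induction with
  | base =>
    refine four_mul_cfDen_succ_sq_lt_tw ha le_rfl ?_
    rw [cfDen_add_two, cfDen_one, cfDen_zero, ha 1 le_rfl, ha 2 (by norm_num)]
    norm_num [tw]
  | succ i hi ih =>
    refine four_mul_cfDen_succ_sq_lt_tw ha (by omega) ?_
    have hT : (tw i (i + 1) : ℤ) < 2 ^ tw i (i + 1) := by exact_mod_cast Nat.lt_two_pow_self
    nlinarith

lemma sixteen_pow_lt_cfPQ_of_eq_tw (ha : ∀ i : ℕ, 1 ≤ i → cfPQ t i = (tw i i : ℤ)) {i d : ℕ}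
    (hi : 3 ≤ i) (hd : cfDen t i = d) : (16 : ℝ) ^ (d ^ 2) < cfPQ t (i + 1) := by
  have h : 4 * d ^ 2 < tw i (i + 1) := by exact_mod_cast hd ▸ four_mul_cfDen_sq_lt_tw ha hi
  rw [ha (i + 1) (by omega), tw, Nat.cast_pow, Nat.cast_ofNat, Int.cast_pow, Int.cast_ofNat]
  calc (16 : ℝ) ^ (d ^ 2) = 2 ^ (4 * d ^ 2) := by rw [pow_mul]; norm_num
    _ < 2 ^ tw i (i + 1) := pow_lt_pow_right₀ one_lt_two h

end TowerOfTwos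

lemma phi_pos : 0 < phi := by
  rw [phi]
  positivity

lemma phi_le_two : phi ≤ 2 := by
  have h : Real.sqrt 5 ≤ 3 := Real.sqrt_le_iff.mpr (by norm_num)
  rw [phi]
  linarith

lemma two_mul_pi_mul_sq_mul_phi_pow_lt_sixteen_pow {d : ℕ} (hd : 2 ≤ d) :
    2 * Real.pi * ((d : ℝ) + 1) ^ 2 * phi ^ (d ^ 2 + 2 * d) < 16 ^ (d ^ 2) := by
  have hphi := phi_pos
  have hd1 : (d : ℝ) + 1 ≤ 2 ^ d := by exact_mod_cast Nat.lt_two_pow_self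
  calc 2 * Real.pi * ((d : ℝ) + 1) ^ 2 * phi ^ (d ^ 2 + 2 * d)
      < 8 * ((d : ℝ) + 1) ^ 2 * phi ^ (d ^ 2 + 2 * d) := by
        gcongr
        linarith [Real.pi_lt_d2]
    _ ≤ 8 * (2 ^ d) ^ 2 * 2 ^ (d ^ 2 + 2 * d) := by gcongr; exact phi_le_two
    _ = 2 ^ (d ^ 2 + 4 * d + 3) := by ring
    _ ≤ 2 ^ (4 * d ^ 2) := pow_le_pow_right₀ (by norm_num) (by nlinarith)
    _ = 16 ^ (d ^ 2) := by rw [pow_mul]; norm_num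

theorem stmt18_general (t : ℝ)
    (ha : ∀ i : ℕ, 1 ≤ i → cfPQ t i = (tw i i : ℤ)) :
    ∀ i : ℕ, 3 ≤ i →
      (16 : ℝ) ^ ((cfDen t i) ^ 2) < (cfPQ t (i + 1) : ℝ) ∧
      |t - (cfNum t i : ℝ) / (cfDen t i : ℝ)| <
        1 / (2 * Real.pi * (cfDen t i : ℝ) ^ 2 * ((cfDen t i : ℝ) + 1) ^ 2 *
          phi ^ ((cfDen t i) ^ 2 + 2 * cfDen t i)) := by
  intro i hi
  have hpos := cfPQ_pos_of_eq_tw ha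
  obtain ⟨d, hd⟩ : ∃ d : ℕ, cfDen t i = d :=
    ⟨(cfDen t i).toNat, by have := one_le_cfDen hpos i; omega⟩
  have hd2 : 2 ≤ d := by exact_mod_cast hd ▸ two_le_cfDen_of_eq_tw ha (by omega : 1 ≤ i)
  have h16 := sixteen_pow_lt_cfPQ_of_eq_tw ha hi hd
  obtain ⟨n, rfl⟩ : ∃ n, i = n + 1 := ⟨i - 1, by omega⟩
  have happrox := abs_sub_cfNum_div_cfDen_lt hpos n
  rw [hd] at happrox ⊢
  have hE : (d : ℤ) ^ 2 + 2 * d = ((d ^ 2 + 2 * d : ℕ) : ℤ) := by push_cast; rfl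
  have hd2' : (d : ℤ) ^ 2 = ((d ^ 2 : ℕ) : ℤ) := by push_cast; rfl
  rw [hE, hd2', zpow_natCast, zpow_natCast, Int.cast_natCast]
  have hphi := phi_pos
  have hd0 : (0 : ℝ) < d := by exact_mod_cast (by omega : 0 < d)
  refine ⟨h16, happrox.trans_le (one_div_le_one_div_of_le (by positivity) ?_)⟩
  calc 2 * Real.pi * (d : ℝ) ^ 2 * ((d : ℝ) + 1) ^ 2 * phi ^ (d ^ 2 + 2 * d)
      = (d : ℝ) ^ 2 * (2 * Real.pi * ((d : ℝ) + 1) ^ 2 * phi ^ (d ^ 2 + 2 * d)) := by ring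
    _ ≤ (d : ℝ) ^ 2 * cfPQ t (n + 2) := by
      gcongr
      exact ((two_mul_pi_mul_sq_mul_phi_pow_lt_sixteen_pow hd2).trans h16).le

/-- For the irrational `t` whose partial quotients are towers of twos,
`a_{i+1} > 16^{d_i²}` and `|t - c_i/d_i| < 1/(2π d_i² (d_i+1)² φ^{d_i²+2d_i})`
for all `i ≥ 3`. -/
theorem stmt18 (t : ℝ) (ht : t ∈ Set.Ioo (0 : ℝ) 1) (hirr : Irrational t)
    (ha : ∀ i : ℕ, 1 ≤ i → cfPQ t i = (tw i i : ℤ)) :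
    ∀ i : ℕ, 3 ≤ i →
      (16 : ℝ) ^ ((cfDen t i) ^ 2) < (cfPQ t (i + 1) : ℝ) ∧
      |t - (cfNum t i : ℝ) / (cfDen t i : ℝ)| <
        1 / (2 * Real.pi * (cfDen t i : ℝ) ^ 2 * ((cfDen t i : ℝ) + 1) ^ 2 *
          phi ^ ((cfDen t i) ^ 2 + 2 * cfDen t i)) :=
  stmt18_general t ha
end
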